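/- Define the generating function F(t) = (1+q)(1 + 5q − q² − q³ − (1−q)√((1−q²)(1−4q−q²)))/(8q), where q = q(t) = (1−2t−√(1−4t))/(2t). Then the first coefficients of the power series expansion of F at t = 0 are 1, 1, 2, 6, 24, 114, 592, 3216, 17904, i.e., F(t) = 1 + t + 2t² + 6t³ + 24t⁴ + 114t⁵ + 592t⁶ + 3216t⁷ + 17904t⁸ + O(t⁹). -/

import Mathlib

/-!
Put `A = 1 + 5q - q² - q³` and `B = (1 - q²)(1 - 4q - q²)`. Since `q = t(1 + q)²`, the variable
`t = q/(1 + q)²` is a function of `q`, and `F(t) = G(q) = (1 + q)(A - (1 - q)√B)/(8q)`.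
From `A² - (1 - q)²B = 16q(1 + q - q²)`, `G` is a root of
`4qG² - (1 + q)AG + (1 + q)²(1 + q - q²) = 0`, whose derivative in `G` tends to `-1` as `q → 0`.
Hence any polynomial satisfying this equation up to `O(q⁹)` agrees with `G` up to `O(q⁹)`.
Substituting `q = q(t) = O(t)` into this polynomial, rewritten in `t = q/(1 + q)²`, gives the
expansion of `F`.
-/

noncomputable def qfun (z : ℝ) : ℝ := (1 - 2 * z - Real.sqrt (1 - 4 * z)) / (2 * z)

noncomputable def Ffun (t : ℝ) : ℝ :=
  (1 + qfun t) * (1 + 5 * qfun t - qfun t ^ 2 - qfun t ^ 3 -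
    (1 - qfun t) * Real.sqrt ((1 - qfun t ^ 2) * (1 - 4 * qfun t - qfun t ^ 2))) /
  (8 * qfun t)

open Filter Asymptotics Topology

section Quadratic

variable {α 𝕜 : Type*} [NormedField 𝕜] {l : Filter α}

theorem isBigO_mul_of_tendsto {f r : α → 𝕜} {c : 𝕜} (hr : Tendsto r l (𝓝 c)) :
    (fun x => f x * r x) =O[l] f := by
  simpa using (isBigO_refl f l).mul (hr.isBigO_one 𝕜)

theorem isBigO_sub_of_quadratic_eq_zero {a b c f p : α → 𝕜} {g : α → ℝ} {d : 𝕜}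
    (hf : ∀ᶠ x in l, a x * f x ^ 2 + b x * f x + c x = 0)
    (hv : Tendsto (fun x => a x * (f x + p x) + b x) l (𝓝 d)) (hd : d ≠ 0)
    (hp : (fun x => a x * p x ^ 2 + b x * p x + c x) =O[l] g) :
    (fun x => f x - p x) =O[l] g := by
  refine ((isBigO_mul_of_tendsto (hv.inv₀ hd)).trans hp.neg_left).congr' ?_ EventuallyEq.rfl
  filter_upwards [hf, hv.eventually_ne hd] with x hfx hvx
  field_simp
  linear_combination -hfx

end Quadratic

noncomputable def Gfun (x : ℝ) : ℝ :=
  (1 + x) * (1 + 5 * x - x ^ 2 - x ^ 3 -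
    (1 - x) * Real.sqrt ((1 - x ^ 2) * (1 - 4 * x - x ^ 2))) / (8 * x)

theorem Ffun_eq_Gfun_qfun (t : ℝ) : Ffun t = Gfun (qfun t) := rfl

theorem Gfun_quadratic_eq_zero {x : ℝ} (hx : x ≠ 0)
    (hB : 0 ≤ (1 - x ^ 2) * (1 - 4 * x - x ^ 2)) :
    4 * x * Gfun x ^ 2 - (1 + x) * (1 + 5 * x - x ^ 2 - x ^ 3) * Gfun x
      + (1 + x) ^ 2 * (1 + x - x ^ 2) = 0 := by
  have hw := Real.sq_sqrt hB
  unfold Gfun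
  field_simp
  linear_combination 4 * (1 - x ^ 2) ^ 2 * hw

theorem mul_Gfun {x : ℝ} (hx : x ≠ 0) :
    x * Gfun x = (1 + x) * (1 + 5 * x - x ^ 2 - x ^ 3 -
      (1 - x) * Real.sqrt ((1 - x ^ 2) * (1 - 4 * x - x ^ 2))) / 8 := by
  unfold Gfun
  field_simp

theorem tendsto_mul_Gfun : Tendsto (fun x => x * Gfun x) (𝓝[≠] 0) (𝓝 0) := by
  have h : Tendsto (fun x : ℝ => (1 + x) * (1 + 5 * x - x ^ 2 - x ^ 3 -
      (1 - x) * Real.sqrt ((1 - x ^ 2) * (1 - 4 * x - x ^ 2))) / 8) (𝓝 0) (𝓝 0) := by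
    convert (by fun_prop : Continuous fun x : ℝ => (1 + x) * (1 + 5 * x - x ^ 2 - x ^ 3 -
      (1 - x) * Real.sqrt ((1 - x ^ 2) * (1 - 4 * x - x ^ 2))) / 8).tendsto 0 using 2
    norm_num
  exact (h.mono_left nhdsWithin_le_nhds).congr' <|
    eventually_nhdsWithin_of_forall fun x hx => (mul_Gfun hx).symm

def Gtaylor (x : ℝ) : ℝ :=
  1 + x + x ^ 3 + 4 * x ^ 4 + 13 * x ^ 5 + 44 * x ^ 6 + 153 * x ^ 7 + 544 * x ^ 8

def Ftaylor (t : ℝ) : ℝ :=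
  1 + t + 2 * t ^ 2 + 6 * t ^ 3 + 24 * t ^ 4 + 114 * t ^ 5 + 592 * t ^ 6 + 3216 * t ^ 7 +
    17904 * t ^ 8

theorem Gtaylor_quadratic_eq (x : ℝ) :
    4 * x * Gtaylor x ^ 2 - (1 + x) * (1 + 5 * x - x ^ 2 - x ^ 3) * Gtaylor x
      + (1 + x) ^ 2 * (1 + x - x ^ 2) =
    x ^ 9 * (1969 + 3294 * x + 4549 * x ^ 2 + 14368 * x ^ 3 + 41064 * x ^ 4 + 110432 * x ^ 5
      + 285124 * x ^ 6 + 665856 * x ^ 7 + 1183744 * x ^ 8) := by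
  unfold Gtaylor
  ring

theorem Gtaylor_sub_Ftaylor {x : ℝ} (hx : 1 + x ≠ 0) :
    Gtaylor x - Ftaylor (x / (1 + x) ^ 2) =
    x ^ 9 * ((99229 + 337076 * x + 944017 * x ^ 2 + 2226164 * x ^ 3 + 4327553 * x ^ 4
      + 6858616 * x ^ 5 + 8819345 * x ^ 6 + 9168592 * x ^ 7 + 7666797 * x ^ 8
      + 5112512 * x ^ 9 + 2680917 * x ^ 10 + 1081252 * x ^ 11 + 323717 * x ^ 12
      + 67772 * x ^ 13 + 8857 * x ^ 14 + 544 * x ^ 15) / (1 + x) ^ 16) := by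
  unfold Gtaylor Ftaylor
  field_simp
  ring

theorem Gfun_sub_Gtaylor_isBigO :
    (fun x => Gfun x - Gtaylor x) =O[𝓝[≠] 0] fun x => x ^ 9 := by
  have hB : ∀ᶠ x : ℝ in 𝓝[≠] 0, 0 < (1 - x ^ 2) * (1 - 4 * x - x ^ 2) := by
    refine (((by fun_prop : Continuous fun x : ℝ => (1 - x ^ 2) * (1 - 4 * x - x ^ 2)).tendsto
      0).eventually (eventually_gt_nhds ?_)).filter_mono nhdsWithin_le_nhds
    norm_num
  refine isBigO_sub_of_quadratic_eq_zero (a := fun x => 4 * x)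
    (b := fun x => -((1 + x) * (1 + 5 * x - x ^ 2 - x ^ 3)))
    (c := fun x => (1 + x) ^ 2 * (1 + x - x ^ 2)) (d := -1) ?_ ?_ (by norm_num) ?_
  · filter_upwards [hB, self_mem_nhdsWithin] with x hBx hx
    linear_combination Gfun_quadratic_eq_zero hx hBx.le
  · have hGt : Tendsto (fun x : ℝ => 4 * x * Gtaylor x - (1 + x) * (1 + 5 * x - x ^ 2 - x ^ 3))
        (𝓝[≠] 0) (𝓝 (-1)) := by
      refine (Continuous.tendsto' ?_ 0 _ ?_).mono_left nhdsWithin_le_nhds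
      · unfold Gtaylor; fun_prop
      · simp [Gtaylor]
    convert (tendsto_mul_Gfun.const_mul 4).add hGt using 2 with x
    · ring
    · norm_num
  · refine (isBigO_mul_of_tendsto (((by fun_prop : Continuous fun x : ℝ => 1969 + 3294 * x
      + 4549 * x ^ 2 + 14368 * x ^ 3 + 41064 * x ^ 4 + 110432 * x ^ 5 + 285124 * x ^ 6
      + 665856 * x ^ 7 + 1183744 * x ^ 8).tendsto 0).mono_left nhdsWithin_le_nhds)).congr_left ?_
    intro x
    linear_combination (Gtaylor_quadratic_eq x).symm

theorem Gtaylor_sub_Ftaylor_isBigO :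
    (fun x => Gtaylor x - Ftaylor (x / (1 + x) ^ 2)) =O[𝓝 0] fun x => x ^ 9 := by
  have hR : ContinuousAt (fun x : ℝ => (99229 + 337076 * x + 944017 * x ^ 2 + 2226164 * x ^ 3
      + 4327553 * x ^ 4 + 6858616 * x ^ 5 + 8819345 * x ^ 6 + 9168592 * x ^ 7
      + 7666797 * x ^ 8 + 5112512 * x ^ 9 + 2680917 * x ^ 10 + 1081252 * x ^ 11
      + 323717 * x ^ 12 + 67772 * x ^ 13 + 8857 * x ^ 14 + 544 * x ^ 15) / (1 + x) ^ 16) 0 := by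
    fun_prop (disch := norm_num)
  refine (isBigO_mul_of_tendsto hR.tendsto).congr' ?_ EventuallyEq.rfl
  filter_upwards [eventually_gt_nhds (show (-1 : ℝ) < 0 by norm_num)] with x hx
  exact (Gtaylor_sub_Ftaylor (by linarith)).symm

theorem Gfun_sub_Ftaylor_isBigO :
    (fun x => Gfun x - Ftaylor (x / (1 + x) ^ 2)) =O[𝓝[≠] 0] fun x => x ^ 9 :=
  (Gfun_sub_Gtaylor_isBigO.add (Gtaylor_sub_Ftaylor_isBigO.mono nhdsWithin_le_nhds)).congr_left
    fun x => by ring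

theorem qfun_eq_div {t : ℝ} (ht : t ≤ 1 / 4) :
    qfun t = 2 * t / (1 - 2 * t + Real.sqrt (1 - 4 * t)) := by
  rcases eq_or_ne t 0 with rfl | ht0
  · simp [qfun]
  have hs := Real.sq_sqrt (show 0 ≤ 1 - 4 * t by linarith)
  have hD : 0 < 1 - 2 * t + Real.sqrt (1 - 4 * t) := by
    linarith [Real.sqrt_nonneg (1 - 4 * t)]
  rw [qfun, div_eq_div_iff (by simpa using ht0) hD.ne']
  linear_combination -hs

theorem qfun_eq_mul_one_add_sq {t : ℝ} (ht : t ≤ 1 / 4) : qfun t = t * (1 + qfun t) ^ 2 := by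
  rw [qfun_eq_div ht]
  have hs := Real.sq_sqrt (show 0 ≤ 1 - 4 * t by linarith)
  set s := Real.sqrt (1 - 4 * t)
  have hD : 1 - 2 * t + s ≠ 0 := by linarith [Real.sqrt_nonneg (1 - 4 * t)]
  field_simp
  linear_combination (-t) * hs

theorem qfun_div_one_add_qfun_sq {t : ℝ} (ht : t ≤ 1 / 4) : qfun t / (1 + qfun t) ^ 2 = t := by
  have hq := qfun_eq_mul_one_add_sq ht
  have h1 : 1 + qfun t ≠ 0 := fun h => by
    rw [h] at hq
    linarith
  rw [div_eq_iff (pow_ne_zero 2 h1)]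
  exact hq

theorem qfun_ne_zero {t : ℝ} (ht : t ≤ 1 / 4) (ht0 : t ≠ 0) : qfun t ≠ 0 := by
  rw [qfun_eq_div ht]
  exact div_ne_zero (by simpa using ht0) (by linarith [Real.sqrt_nonneg (1 - 4 * t)])

theorem qfun_isBigO_id : qfun =O[𝓝 0] id := by
  have hD : Tendsto (fun t : ℝ => 2 / (1 - 2 * t + Real.sqrt (1 - 4 * t))) (𝓝 0) (𝓝 1) := by
    convert (by fun_prop (disch := norm_num) : ContinuousAt
      (fun t : ℝ => 2 / (1 - 2 * t + Real.sqrt (1 - 4 * t))) 0).tendsto using 2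
    norm_num
  refine (isBigO_mul_of_tendsto hD).congr' ?_ EventuallyEq.rfl
  filter_upwards [eventually_le_nhds (show (0 : ℝ) < 1 / 4 by norm_num)] with t ht
  rw [qfun_eq_div ht, id, mul_div_assoc', mul_comm]

theorem tendsto_qfun_nhdsNE : Tendsto qfun (𝓝[≠] 0) (𝓝[≠] 0) := by
  refine tendsto_nhdsWithin_iff.2 ⟨?_, ?_⟩
  · exact (qfun_isBigO_id.trans_tendsto tendsto_id).mono_left nhdsWithin_le_nhds
  · filter_upwards [eventually_le_nhds (show (0 : ℝ) < 1 / 4 by norm_num) |>.filter_mono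
      nhdsWithin_le_nhds, self_mem_nhdsWithin] with t ht ht0
    exact qfun_ne_zero ht ht0

theorem stmt17 :
    (fun t : ℝ => Ffun t - (1 + t + 2 * t ^ 2 + 6 * t ^ 3 + 24 * t ^ 4 +
        114 * t ^ 5 + 592 * t ^ 6 + 3216 * t ^ 7 + 17904 * t ^ 8))
      =O[nhdsWithin 0 {(0 : ℝ)}ᶜ] (fun t : ℝ => t ^ 9) := by
  have hG := Gfun_sub_Ftaylor_isBigO.comp_tendsto tendsto_qfun_nhdsNE
  have hq : (fun t => qfun t ^ 9) =O[𝓝[≠] 0] fun t => t ^ 9 :=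
    (qfun_isBigO_id.mono nhdsWithin_le_nhds).pow 9
  refine (hG.trans hq).congr' ?_ EventuallyEq.rfl
  filter_upwards [eventually_le_nhds (show (0 : ℝ) < 1 / 4 by norm_num) |>.filter_mono
    nhdsWithin_le_nhds] with t ht
  simp only [Function.comp_apply, qfun_div_one_add_qfun_sq ht, Ffun_eq_Gfun_qfun, Ftaylor]
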